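/- Strong soundness: if X ⊢ φ in the awareness proof system, then for every epistemic model, every world w, and every agent a present in w, if w,a ⊨ χ for all χ ∈ X then w,a ⊨ φ. -/

import Mathlib

/-- Formulas of the awareness logic: propositional variables, ¬, →, and
modalities K (knows about herself), R (de re aware), D (de dicto aware). -/
inductive Formula : Type
  | var : ℕ → Formula
  | neg : Formula → Formula
  | imp : Formula → Formula → Formula
  | K : Formula → Formula
  | R : Formula → Formula
  | D : Formula → Formula
deriving DecidableEq

/-- Truth constant ⊤, defined in the standard way. -/
def fTop : Formula := (Formula.var 0).imp (Formula.var 0)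

/-- False constant ⊥, defined in the standard way. -/
def fBot : Formula := fTop.neg

/-- Disjunction, defined in the standard way from ¬ and →. -/
def fOr (φ ψ : Formula) : Formula := φ.neg.imp ψ

/-- An epistemic model (W, 𝒜, P, ∼, π): presence relation P ⊆ 𝒜 × W,
indistinguishability ∼ₐ an equivalence relation on Pₐ = {w | a P w},
and π(p) ⊆ P. -/
structure EpistemicModel where
  W : Type
  A : Type
  P : A → W → Prop
  indist : A → W → W → Prop
  indist_left : ∀ a w u, indist a w u → P a w
  indist_right : ∀ a w u, indist a w u → P a u
  indist_refl : ∀ a w, P a w → indist a w w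
  indist_symm : ∀ a w u, indist a w u → indist a u w
  indist_trans : ∀ a w u v, indist a w u → indist a u v → indist a w v
  pi : ℕ → A → W → Prop
  pi_sub : ∀ p a w, pi p a w → P a w

/-- The satisfaction relation w,a ⊨ φ. -/
def Sat (M : EpistemicModel) : Formula → M.W → M.A → Prop
  | .var p, w, a => M.pi p a w
  | .neg φ, w, a => ¬ Sat M φ w a
  | .imp φ ψ, w, a => Sat M φ w a → Sat M ψ w a
  | .K φ, w, a => ∀ u, M.P a u → M.indist a w u → Sat M φ u a
  | .R φ, w, a => ∃ b, M.P b w ∧ Sat M φ w b ∧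
      (∀ u, M.P a u → M.indist a w u → M.P b u)
  | .D φ, w, a => ∀ u, M.P a u → M.indist a w u →
      ∃ b, M.P b u ∧ Sat M φ u b

/-- Validity: true at every world-agent pair (with the agent present)
of every epistemic model. -/
def Valid (φ : Formula) : Prop :=
  ∀ (M : EpistemicModel) (w : M.W) (a : M.A), M.P a w → Sat M φ w a

/-- Propositional tautology: true under every boolean valuation of formulas
that respects ¬ and →. -/
def IsTaut (φ : Formula) : Prop :=
  ∀ v : Formula → Bool,
    (∀ ψ, v ψ.neg = !(v ψ)) →
    (∀ ψ χ, v (ψ.imp χ) = (!(v ψ) || v χ)) →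
    v φ = true

/-- Theorems of the awareness proof system. -/
inductive Thm : Formula → Prop
  | taut {φ : Formula} : IsTaut φ → Thm φ
  | truth (φ : Formula) : Thm ((Formula.K φ).imp φ)
  | negIntro (φ : Formula) : Thm ((Formula.K φ).neg.imp (Formula.K (Formula.K φ).neg))
  | distr (φ ψ : Formula) : Thm ((Formula.K (φ.imp ψ)).imp ((Formula.K φ).imp (Formula.K ψ)))
  | selfAwareR (φ : Formula) : Thm (φ.imp (Formula.R φ))
  | selfAwareD (φ : Formula) : Thm ((Formula.K φ).imp (Formula.D φ))
  | introAware (φ : Formula) : Thm ((Formula.D φ).imp (Formula.K (Formula.D φ)))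
  | unawareR : Thm (Formula.R fBot).neg
  | unawareD : Thm (Formula.D fBot).neg
  | disjunct (φ ψ : Formula) : Thm ((Formula.R (fOr φ ψ)).imp (fOr (Formula.R φ) (Formula.R ψ)))
  | genAware (φ : Formula) : Thm ((Formula.D (fOr (Formula.R φ) (Formula.D φ))).imp (Formula.D φ))
  | mp {φ ψ : Formula} : Thm (φ.imp ψ) → Thm φ → Thm ψ
  | nec {φ : Formula} : Thm φ → Thm (Formula.K φ)
  | monoD {φ ψ : Formula} : Thm (φ.imp ψ) → Thm ((Formula.D φ).imp (Formula.D ψ))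
  | monoR {φ ψ : Formula} : Thm (φ.imp ψ) → Thm ((Formula.R φ).imp (Formula.R ψ))

/-- X ⊢ φ: derivable from theorems and X using only Modus Ponens. -/
inductive Deriv (X : Set Formula) : Formula → Prop
  | thm {φ : Formula} : Thm φ → Deriv X φ
  | hyp {φ : Formula} : φ ∈ X → Deriv X φ
  | mp {φ ψ : Formula} : Deriv X (φ.imp ψ) → Deriv X φ → Deriv X ψ

/-- X is consistent if X ⊬ ⊥. -/
def Consistent (X : Set Formula) : Prop := ¬ Deriv X fBot

/-- Maximal consistent set. -/
def MaxConsistent (X : Set Formula) : Prop :=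
  Consistent X ∧ ∀ φ : Formula, φ ∈ X ∨ φ.neg ∈ X

/-- General awareness modality Aχ := Rχ ∨ Dχ. -/
def fA (φ : Formula) : Formula := fOr (Formula.R φ) (Formula.D φ)

/-- n-fold application of A. -/
def fAn : ℕ → Formula → Formula
  | 0, φ => φ
  | n + 1, φ => fA (fAn n φ)

/-- X is λ-assured if X ⊬ Aⁿ¬λ for every n ≥ 0. -/
def Assured (l : Formula) (X : Set Formula) : Prop :=
  ∀ n : ℕ, ¬ Deriv X (fAn n l.neg)

/-! Every theorem of the proof system is valid: each axiom is checked directly against the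
semantics, and the rules preserve validity. A derivation from `X` then only adds modus ponens,
which preserves truth at the fixed pair `(w, a)` where all of `X` holds. -/

lemma not_sat_fBot {M : EpistemicModel} (w : M.W) (a : M.A) : ¬ Sat M fBot w a :=
  fun h => h id

lemma sat_fOr {M : EpistemicModel} {φ ψ : Formula} {w : M.W} {a : M.A} :
    Sat M (fOr φ ψ) w a ↔ Sat M φ w a ∨ Sat M ψ w a :=
  or_iff_not_imp_left.symm

lemma valid_of_isTaut {φ : Formula} (h : IsTaut φ) : Valid φ := by
  intro M w a _
  classical
  simpa using h (fun ψ => decide (Sat M ψ w a))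
    (fun _ => Bool.eq_iff_iff.mpr <| by
      simp only [decide_eq_true_iff, Bool.not_eq_true', decide_eq_false_iff_not]; rfl)
    (fun _ _ => Bool.eq_iff_iff.mpr <| by
      simp only [decide_eq_true_iff, Bool.or_eq_true, Bool.not_eq_true', decide_eq_false_iff_not]
      exact imp_iff_not_or)

lemma valid_truth (φ : Formula) : Valid ((Formula.K φ).imp φ) :=
  fun M w a ha hK => hK w ha (M.indist_refl a w ha)

lemma valid_negIntro (φ : Formula) :
    Valid ((Formula.K φ).neg.imp (Formula.K (Formula.K φ).neg)) :=
  fun M w a _ hnK u _ hwu hK =>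
    hnK fun v hv hwv => hK v hv (M.indist_trans a u w v (M.indist_symm a w u hwu) hwv)

lemma valid_distr (φ ψ : Formula) :
    Valid ((Formula.K (φ.imp ψ)).imp ((Formula.K φ).imp (Formula.K ψ))) :=
  fun _ _ _ _ hKimp hK u hu hwu => hKimp u hu hwu (hK u hu hwu)

lemma valid_selfAwareR (φ : Formula) : Valid (φ.imp (Formula.R φ)) :=
  fun _ _ a ha hφ => ⟨a, ha, hφ, fun _ hu _ => hu⟩

lemma valid_selfAwareD (φ : Formula) : Valid ((Formula.K φ).imp (Formula.D φ)) :=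
  fun _ _ a _ hK u hu hwu => ⟨a, hu, hK u hu hwu⟩

lemma valid_introAware (φ : Formula) : Valid ((Formula.D φ).imp (Formula.K (Formula.D φ))) :=
  fun M w a _ hD u _ hwu v hv huv => hD v hv (M.indist_trans a w u v hwu huv)

lemma valid_unawareR : Valid (Formula.R fBot).neg :=
  fun _ w _ _ ⟨b, _, hb, _⟩ => not_sat_fBot w b hb

lemma valid_unawareD : Valid (Formula.D fBot).neg := fun M w a ha hD =>
  let ⟨b, _, hb⟩ := hD w ha (M.indist_refl a w ha)
  not_sat_fBot w b hb

lemma valid_disjunct (φ ψ : Formula) :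
    Valid ((Formula.R (fOr φ ψ)).imp (fOr (Formula.R φ) (Formula.R ψ))) := by
  rintro M w a - ⟨b, hbw, hφψ, hcover⟩
  refine sat_fOr.mpr ?_
  rcases sat_fOr.mp hφψ with hφ | hψ
  · exact .inl ⟨b, hbw, hφ, hcover⟩
  · exact .inr ⟨b, hbw, hψ, hcover⟩

lemma valid_genAware (φ : Formula) :
    Valid ((Formula.D (fOr (Formula.R φ) (Formula.D φ))).imp (Formula.D φ)) := by
  intro M w a _ hDA u hu hwu
  obtain ⟨b, hbu, hA⟩ := hDA u hu hwu
  rcases sat_fOr.mp hA with ⟨c, hcu, hφ, -⟩ | hD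
  · exact ⟨c, hcu, hφ⟩
  · exact hD u hbu (M.indist_refl b u hbu)

lemma Valid.mp {φ ψ : Formula} (himp : Valid (φ.imp ψ)) (hφ : Valid φ) : Valid ψ :=
  fun M w a ha => himp M w a ha (hφ M w a ha)

lemma Valid.nec {φ : Formula} (h : Valid φ) : Valid (Formula.K φ) :=
  fun M _ a _ u hu _ => h M u a hu

lemma Valid.monoD {φ ψ : Formula} (h : Valid (φ.imp ψ)) :
    Valid ((Formula.D φ).imp (Formula.D ψ)) := fun M _ _ _ hD u hu hwu =>
  let ⟨b, hbu, hφ⟩ := hD u hu hwu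
  ⟨b, hbu, h M u b hbu hφ⟩

lemma Valid.monoR {φ ψ : Formula} (h : Valid (φ.imp ψ)) :
    Valid ((Formula.R φ).imp (Formula.R ψ)) := fun M w _ _ ⟨b, hbw, hφ, hcover⟩ =>
  ⟨b, hbw, h M w b hbw hφ, hcover⟩

theorem Thm.valid {φ : Formula} (h : Thm φ) : Valid φ := by
  induction h with
  | taut h => exact valid_of_isTaut h
  | truth φ => exact valid_truth φ
  | negIntro φ => exact valid_negIntro φ
  | distr φ ψ => exact valid_distr φ ψ
  | selfAwareR φ => exact valid_selfAwareR φ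
  | selfAwareD φ => exact valid_selfAwareD φ
  | introAware φ => exact valid_introAware φ
  | unawareR => exact valid_unawareR
  | unawareD => exact valid_unawareD
  | disjunct φ ψ => exact valid_disjunct φ ψ
  | genAware φ => exact valid_genAware φ
  | mp _ _ himp hφ => exact himp.mp hφ
  | nec _ h => exact h.nec
  | monoD _ h => exact h.monoD
  | monoR _ h => exact h.monoR

theorem strong_soundness (X : Set Formula) (φ : Formula) (h : Deriv X φ)
    (M : EpistemicModel) (w : M.W) (a : M.A) (ha : M.P a w)
    (hX : ∀ χ ∈ X, Sat M χ w a) : Sat M φ w a := by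
  induction h with
  | thm ht => exact ht.valid M w a ha
  | hyp hχ => exact hX _ hχ
  | mp _ _ himp hφ => exact himp hφ
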